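/- Let A be an n×n real matrix and let α, β be permutations of Fin n such that the determinant terms T_α = sgn(α) · ∏_i A i (α i) and T_β = sgn(β) · ∏_i A i (β i) are both nonzero. Suppose that π = α⁻¹ ∘ β is a single cycle (π.IsCycle) with support s, and that the corresponding SR-graph cycle is both an e-cycle, i.e. (-1)^{|s|} · ∏_{i∈s} sign(A i (α i) · A i (β i)) = 1, and an s-cycle, i.e. ∏_{i∈s} |A i (α i)| = ∏_{i∈s} |A i (β i)|. Then T_α + T_β = 0. -/
import Mathlib



private lemma real_sign_mul_abs (x : ℝ) : Real.sign x * |x| = x := by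
  rcases lt_trichotomy x 0 with h | h | h
  · rw [Real.sign_of_neg h, abs_of_neg h]; ring
  · simp [h]
  · rw [Real.sign_of_pos h, abs_of_pos h]; ring

/-- For an `n×n` real matrix `A` and permutations `α, β` with nonzero determinant terms
`T_α = sgn(α)·∏ A i (α i)` and `T_β = sgn(β)·∏ A i (β i)`: if `π = α⁻¹ ∘ β` is a single
cycle with support `s`, and the corresponding SR-graph cycle is both an e-cycle
(`(-1)^{|s|} · ∏_{i∈s} sign(A i (α i) · A i (β i)) = 1`) and an s-cycle
(`∏_{i∈s} |A i (α i)| = ∏_{i∈s} |A i (β i)|`), then `T_α + T_β = 0`. -/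
theorem terms_cancel_of_e_and_s_cycle {n : ℕ} (A : Matrix (Fin n) (Fin n) ℝ)
    (α β : Equiv.Perm (Fin n))
    (hα : ((Equiv.Perm.sign α : ℤ) : ℝ) * ∏ i, A i (α i) ≠ 0)
    (hβ : ((Equiv.Perm.sign β : ℤ) : ℝ) * ∏ i, A i (β i) ≠ 0)
    (hcyc : (α⁻¹ * β).IsCycle)
    (he : (-1 : ℝ) ^ (α⁻¹ * β).support.card *
      ∏ i ∈ (α⁻¹ * β).support, Real.sign (A i (α i) * A i (β i)) = 1)
    (hs : ∏ i ∈ (α⁻¹ * β).support, |A i (α i)| =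
      ∏ i ∈ (α⁻¹ * β).support, |A i (β i)|) :
    (((Equiv.Perm.sign α : ℤ) : ℝ) * ∏ i, A i (α i)) +
      (((Equiv.Perm.sign β : ℤ) : ℝ) * ∏ i, A i (β i)) = 0 := by
  classical
  set s := (α⁻¹ * β).support with hsdef
  have hneα : ∀ i, A i (α i) ≠ 0 := fun i =>
    Finset.prod_ne_zero_iff.mp (right_ne_zero_of_mul hα) i (Finset.mem_univ i)
  have hoff : ∀ i ∉ s, A i (α i) = A i (β i) := by
    intro i hi
    have h1 : (α⁻¹ * β) i = i := Equiv.Perm.notMem_support.mp hi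
    have h2 : β i = α i := by
      have := congrArg α h1
      simpa using this
    rw [h2]
  have hsplitα : ∏ i, A i (α i) = (∏ i ∈ s, A i (α i)) * ∏ i ∈ sᶜ, A i (α i) :=
    (Finset.prod_mul_prod_compl s _).symm
  have hsplitβ : ∏ i, A i (β i) = (∏ i ∈ s, A i (β i)) * ∏ i ∈ sᶜ, A i (α i) := by
    rw [← Finset.prod_mul_prod_compl s fun i => A i (β i)]
    congr 1
    exact Finset.prod_congr rfl fun i hi => (hoff i (Finset.mem_compl.mp hi)).symm
  have hsign : ∏ i ∈ s, Real.sign (A i (α i) * A i (β i)) = (-1 : ℝ) ^ s.card := by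
    have h2 : ((-1 : ℝ) ^ s.card) * ((-1 : ℝ) ^ s.card) = 1 := by
      rw [← mul_pow]; norm_num
    calc ∏ i ∈ s, Real.sign (A i (α i) * A i (β i))
        = ((-1 : ℝ) ^ s.card) * ((-1 : ℝ) ^ s.card *
            ∏ i ∈ s, Real.sign (A i (α i) * A i (β i))) := by
          rw [← mul_assoc, h2, one_mul]
      _ = (-1 : ℝ) ^ s.card := by rw [he, mul_one]
  have hPα : (∏ i ∈ s, A i (α i)) ≠ 0 := Finset.prod_ne_zero_iff.mpr fun i _ => hneα i
  have hkey : ∏ i ∈ s, A i (β i) = (-1 : ℝ) ^ s.card * ∏ i ∈ s, A i (α i) := by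
    apply mul_left_cancel₀ hPα
    have h1 : (∏ i ∈ s, A i (α i)) * ∏ i ∈ s, A i (β i)
        = ∏ i ∈ s, (A i (α i) * A i (β i)) := (Finset.prod_mul_distrib).symm
    rw [h1]
    have h2 : ∀ i ∈ s, A i (α i) * A i (β i)
        = Real.sign (A i (α i) * A i (β i)) * |A i (α i) * A i (β i)| :=
      fun i _ => (real_sign_mul_abs _).symm
    rw [Finset.prod_congr rfl h2, Finset.prod_mul_distrib, hsign]
    have habs : ∏ i ∈ s, |A i (α i) * A i (β i)|
        = (∏ i ∈ s, |A i (α i)|) * ∏ i ∈ s, |A i (β i)| := by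
      simp [abs_mul, Finset.prod_mul_distrib]
    rw [habs, ← hs, ← Finset.abs_prod, abs_mul_abs_self]
    ring
  have hsβ : ((Equiv.Perm.sign β : ℤ) : ℝ) =
      ((Equiv.Perm.sign α : ℤ) : ℝ) * (-(-1 : ℝ) ^ s.card) := by
    have h1 : Equiv.Perm.sign (α⁻¹ * β) = Equiv.Perm.sign α * Equiv.Perm.sign β := by
      simp [mul_comm]
    have h2 : Equiv.Perm.sign β = Equiv.Perm.sign α * Equiv.Perm.sign (α⁻¹ * β) := by
      rw [h1, ← mul_assoc]
      simp
    have h3 := hcyc.sign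
    rw [h2, h3]
    push_cast
    ring
  rw [hsplitα, hsplitβ, hkey, hsβ]
  have ht : ((-1 : ℝ) ^ s.card) * ((-1 : ℝ) ^ s.card) = 1 := by
    rw [← mul_pow]; norm_num
  linear_combination (-(((Equiv.Perm.sign α : ℤ) : ℝ) *
    (∏ i ∈ s, A i (α i)) * ∏ i ∈ sᶜ, A i (α i))) * ht
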